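/- Let G be a non-complete graph with exactly two moplexes U and W. Then for every minimal separator S of G, the graph G−S has exactly two connected components, one containing U and the other containing W. -/

import Mathlib

open SimpleGraph

namespace MoplexPaper

variable {V : Type*}

/-- Reachability in `G - S`: a walk from `u` to `v` all of whose vertices avoid `S`. -/
def ReachOutside (G : SimpleGraph V) (S : Set V) (u v : V) : Prop :=
  ∃ p : G.Walk u v, ∀ x ∈ p.support, x ∉ S

/-- `S` is a `u,v`-separator. -/
def IsSeparator (G : SimpleGraph V) (u v : V) (S : Set V) : Prop :=
  ¬ G.Adj u v ∧ u ∉ S ∧ v ∉ S ∧ ¬ ReachOutside G S u v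

/-- `S` is a minimal `u,v`-separator. -/
def IsMinSeparator (G : SimpleGraph V) (u v : V) (S : Set V) : Prop :=
  IsSeparator G u v S ∧ ∀ T ⊂ S, ¬ IsSeparator G u v T

/-- `S` is a minimal separator of `G`. -/
def IsMinimalSeparator (G : SimpleGraph V) (S : Set V) : Prop :=
  ∃ u v, u ≠ v ∧ IsMinSeparator G u v S

/-- The (open) neighbourhood of a set of vertices. -/
def setNbhd (G : SimpleGraph V) (X : Set V) : Set V :=
  {v | v ∉ X ∧ ∃ x ∈ X, G.Adj v x}

/-- The closed neighbourhood of a vertex. -/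
def closedNbhd (G : SimpleGraph V) (v : V) : Set V :=
  insert v (G.neighborSet v)

/-- `M` is a module of `G`. -/
def IsModule (G : SimpleGraph V) (M : Set V) : Prop :=
  ∀ v ∉ M, (∀ x ∈ M, G.Adj v x) ∨ (∀ x ∈ M, ¬ G.Adj v x)

/-- `M` is a clique module of `G`. -/
def IsCliqueModule (G : SimpleGraph V) (M : Set V) : Prop :=
  G.IsClique M ∧ IsModule G M

/-- `X` is a moplex of `G`: an inclusion-maximal clique module whose
neighbourhood is empty or a minimal separator. -/
def IsMoplex (G : SimpleGraph V) (X : Set V) : Prop :=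
  X.Nonempty ∧ IsCliqueModule G X ∧
  (∀ Y, X ⊆ Y → IsCliqueModule G Y → Y = X) ∧
  (setNbhd G X = ∅ ∨ IsMinimalSeparator G (setNbhd G X))

/-- A vertex is moplicial if it belongs to a moplex. -/
def Moplicial (G : SimpleGraph V) (v : V) : Prop := ∃ X, IsMoplex G X ∧ v ∈ X

/-- An extension of `v`: an induced `P₃` with midpoint `v`. -/
def IsExtension (G : SimpleGraph V) (v a b : V) : Prop :=
  a ≠ b ∧ G.Adj v a ∧ G.Adj v b ∧ ¬ G.Adj a b

/-- A cycle is induced if the only edges of `G` among its vertices are its own edges. -/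
def IsInducedCycle (G : SimpleGraph V) {w : V} (c : G.Walk w w) : Prop :=
  c.IsCycle ∧ ∀ x ∈ c.support, ∀ y ∈ c.support, G.Adj x y → s(x, y) ∈ c.edges

/-- `v` is avoidable: every extension of `v` is contained in an induced cycle. -/
def Avoidable (G : SimpleGraph V) (v : V) : Prop :=
  ∀ a b, IsExtension G v a b →
    ∃ (w : V) (c : G.Walk w w), IsInducedCycle G c ∧
      a ∈ c.support ∧ v ∈ c.support ∧ b ∈ c.support

/-- `A` is an asteroidal set of `G`. -/
def IsAsteroidal (G : SimpleGraph V) (A : Set V) : Prop :=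
  ∀ a ∈ A, ∀ x ∈ A, ∀ y ∈ A, x ≠ a → y ≠ a →
    ReachOutside G (closedNbhd G a) x y

/-- `G` is AT-free: it has no asteroidal triple. -/
def ATFree (G : SimpleGraph V) : Prop :=
  ¬ ∃ A : Set V, IsAsteroidal G A ∧ A.ncard = 3

/-- `G` has exactly the two moplexes `U` and `W`. -/
def HasExactlyTwoMoplexes (G : SimpleGraph V) (U W : Set V) : Prop :=
  IsMoplex G U ∧ IsMoplex G W ∧ U ≠ W ∧ ∀ X, IsMoplex G X → X = U ∨ X = W

/-- `G` is not complete. -/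
def NonComplete (G : SimpleGraph V) : Prop :=
  ∃ x y : V, x ≠ y ∧ ¬ G.Adj x y

/-! Every component `C` of `G - S`, for a minimal separator `S`, contains a moplex. Indeed `N(C)`
is empty or a minimal separator that has, besides `C`, a second full component. If `C` is a
clique module, this second component witnesses that `C` is maximal, so `C` is a moplex. Otherwise
a non-adjacent pair `p ∈ C`, `q ∈ C ∪ N(C)` has a minimal separator `T ⊆ C ∪ N(C)`, and since `p`
and `q` cannot both reach `N(C)` in `G - T` (they would meet through the second full component),
one of their components in `G - T` is a proper subset of `C`; induct.

The endpoints `u, v` of `S` lie in distinct components of `G - S`, whose moplexes must therefore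
be `U` and `W`, and the moplex in the component of any other vertex is `U` or `W` as well. -/

variable {G : SimpleGraph V} {S T C : Set V} {u v w x y z g p q : V}

namespace ReachOutside

lemma refl (hx : x ∉ S) : ReachOutside G S x x :=
  ⟨Walk.nil, by simpa using hx⟩

lemma symm (h : ReachOutside G S x y) : ReachOutside G S y x :=
  let ⟨p, hp⟩ := h
  ⟨p.reverse, fun z hz => hp z (by simpa using hz)⟩

lemma trans (h₁ : ReachOutside G S x y) (h₂ : ReachOutside G S y z) : ReachOutside G S x z :=
  let ⟨p, hp⟩ := h₁
  let ⟨q, hq⟩ := h₂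
  ⟨p.append q, fun a ha => ((Walk.mem_support_append_iff p q).1 ha).elim (hp a) (hq a)⟩

lemma notMem_left (h : ReachOutside G S x y) : x ∉ S :=
  let ⟨p, hp⟩ := h
  hp x p.start_mem_support

lemma notMem_right (h : ReachOutside G S x y) : y ∉ S :=
  let ⟨p, hp⟩ := h
  hp y p.end_mem_support

lemma anti (h : ReachOutside G S x y) (hTS : T ⊆ S) : ReachOutside G T x y :=
  let ⟨p, hp⟩ := h
  ⟨p, fun z hz hzT => hp z hz (hTS hzT)⟩

lemma of_adj (h : G.Adj x y) (hx : x ∉ S) (hy : y ∉ S) : ReachOutside G S x y :=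
  ⟨h.toWalk, by simp [hx, hy]⟩

lemma of_mem_support (p : G.Walk x y) (hp : ∀ z ∈ p.support, z ∉ S) (hz : z ∈ p.support) :
    ReachOutside G S x z := by
  classical
  exact ⟨p.takeUntil z hz, fun a ha => hp a (p.support_takeUntil_subset_support hz ha)⟩

end ReachOutside

def componentOutside (G : SimpleGraph V) (S : Set V) (x : V) : Set V :=
  {y | ReachOutside G S x y}

lemma mem_componentOutside : y ∈ componentOutside G S x ↔ ReachOutside G S x y := Iff.rfl

lemma mem_of_reachOutside_setNbhd (h : ReachOutside G (setNbhd G C) x y) (hx : x ∈ C) :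
    y ∈ C := by
  obtain ⟨p, hp⟩ := h
  induction p with
  | nil => exact hx
  | cons hab q ih =>
    refine ih ?_ fun z hz => hp z (by simp [hz])
    by_contra hb
    exact hp _ (by simp) ⟨hb, _, hx, hab.symm⟩

lemma setNbhd_componentOutside_subset : setNbhd G (componentOutside G S x) ⊆ S := by
  rintro z ⟨hzC, c, hcC, hzc⟩
  by_contra hzS
  have hxc : ReachOutside G S x c := hcC
  exact hzC (hxc.trans (.of_adj hzc.symm hxc.notMem_right hzS))

lemma componentOutside_subset_of_disjoint (hg : g ∈ C)
    (h : Disjoint (componentOutside G T g) (setNbhd G C)) : componentOutside G T g ⊆ C := by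
  rintro y ⟨p, hp⟩
  refine mem_of_reachOutside_setNbhd ⟨p, fun z hz hzN => ?_⟩ hg
  exact Set.disjoint_left.1 h (ReachOutside.of_mem_support p hp hz) hzN

lemma componentOutside_ssubset (hg : g ∈ C)
    (hdisj : Disjoint (componentOutside G T g) (setNbhd G C)) (hp : p ∈ C)
    (hgp : ¬ ReachOutside G T g p) : componentOutside G T g ⊂ C :=
  ssubset_of_subset_not_subset (componentOutside_subset_of_disjoint hg hdisj)
    fun hsub => hgp (hsub hp)

lemma IsSeparator.symm (h : IsSeparator G u v S) : IsSeparator G v u S :=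
  ⟨fun a => h.1 a.symm, h.2.2.1, h.2.1, fun r => h.2.2.2 r.symm⟩

lemma IsMinSeparator.symm (h : IsMinSeparator G u v S) : IsMinSeparator G v u S :=
  ⟨h.1.symm, fun T hT hsep => h.2 T hT hsep.symm⟩

lemma IsSeparator.disjoint_componentOutside (h : IsSeparator G u v S) :
    Disjoint (componentOutside G S u) (componentOutside G S v) :=
  Set.disjoint_left.2 fun _ (hu : ReachOutside G S u _) (hv : ReachOutside G S v _) =>
    h.2.2.2 (hu.trans hv.symm)

lemma IsSeparator.exists_isMinSeparator_subset [Finite V] (h : IsSeparator G u v S) :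
    ∃ T ⊆ S, IsMinSeparator G u v T := by
  obtain ⟨T, hTS, hT⟩ := (Set.toFinite {T | IsSeparator G u v T}).exists_le_minimal h
  exact ⟨T, hTS, hT.prop, fun T' hT' hsep => hT'.not_ge (hT.le_of_le hsep hT'.le)⟩

lemma Walk.exists_reachOutside_adj_mem (p : G.Walk u y) (hu : u ∉ S)
    (hmeet : ∃ z ∈ p.support, z ∈ S) :
    ∃ c s, s ∈ p.support ∧ s ∈ S ∧ ReachOutside G S u c ∧ G.Adj c s := by
  induction p with
  | nil => simp_all
  | @cons _ b _ hab q ih =>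
    by_cases hb : b ∈ S
    · exact ⟨_, _, by simp, hb, .refl hu, hab⟩
    · obtain ⟨c, s, hs, hsS, hbc, hcs⟩ := ih hb (by simpa [hu] using hmeet)
      exact ⟨c, s, by simp [hs], hsS, (ReachOutside.of_adj hab hu hb).trans hbc, hcs⟩

/-- Removing `s` from `S` reconnects `u` and `v`, and the reconnecting walk enters `s` from the
component of `u`. -/
lemma IsMinSeparator.exists_adj_of_mem {s : V} (h : IsMinSeparator G u v S) (hs : s ∈ S) :
    ∃ c, ReachOutside G S u c ∧ G.Adj c s := by
  obtain ⟨⟨hadj, hu, hv, huv⟩, hmin⟩ := h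
  obtain ⟨p, hp⟩ : ReachOutside G (S \ {s}) u v := by
    by_contra hr
    exact hmin _ (Set.sdiff_singleton_ssubset.2 hs)
      ⟨hadj, fun h => hu h.1, fun h => hv h.1, hr⟩
  have hmeet : ∃ z ∈ p.support, z ∈ S := by
    by_contra! hz
    exact huv ⟨p, hz⟩
  obtain ⟨c, s', hs', hs'S, huc, hcs'⟩ := Walk.exists_reachOutside_adj_mem p hu hmeet
  obtain rfl : s' = s := by
    by_contra hne
    exact hp s' hs' ⟨hs'S, hne⟩
  exact ⟨c, huc, hcs'⟩

lemma exists_isMinSeparator_subset_union_setNbhd [Finite V] (hp : p ∈ C)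
    (hq : q ∈ C ∪ setNbhd G C) (hpq : p ≠ q) (hadj : ¬ G.Adj p q) :
    ∃ T ⊆ C ∪ setNbhd G C, IsMinSeparator G p q T := by
  have hsep : IsSeparator G p q ((C ∪ setNbhd G C) \ {p, q}) := by
    refine ⟨hadj, fun h => h.2 (by simp), fun h => h.2 (by simp), ?_⟩
    rintro ⟨r, hr⟩
    obtain ⟨b, hpb, r', rfl⟩ := r.exists_eq_cons_of_ne hpq
    have hb : b ∈ C ∪ setNbhd G C := by
      by_cases hbC : b ∈ C
      · exact .inl hbC
      · exact .inr ⟨hbC, p, hp, hpb.symm⟩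
    have hbpq : b ∉ ({p, q} : Set V) := by
      rintro (rfl | rfl)
      exacts [hpb.ne rfl, hadj hpb]
    exact hr b (by simp) ⟨hb, hbpq⟩
  obtain ⟨T, hT, hmin⟩ := hsep.exists_isMinSeparator_subset
  exact ⟨T, hT.trans Set.sdiff_subset, hmin⟩

/-- `w` lies in a full component of `N(C)` disjoint from `C`. -/
def IsFullOpposite (G : SimpleGraph V) (C : Set V) (w : V) : Prop :=
  ∀ s ∈ setNbhd G C, ∃ d, ReachOutside G (C ∪ setNbhd G C) w d ∧ G.Adj d s

lemma exists_isFullOpposite_componentOutside (h : IsMinSeparator G u v S) :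
    ∃ w, IsFullOpposite G (componentOutside G S x) w := by
  set C := componentOutside G S x
  obtain ⟨w, hwC, hw⟩ :
      ∃ w ∉ C, ∀ s ∈ S, ∃ c, ReachOutside G S w c ∧ G.Adj c s := by
    by_cases hu : u ∈ C
    · refine ⟨v, fun (hv : ReachOutside G S x v) => ?_, fun s hs => h.symm.exists_adj_of_mem hs⟩
      exact h.1.2.2.2 ((mem_componentOutside.1 hu).symm.trans hv)
    · exact ⟨u, hu, fun s hs => h.exists_adj_of_mem hs⟩
  refine ⟨w, fun s hs => ?_⟩
  obtain ⟨d, ⟨p, hp⟩, hds⟩ := hw s (setNbhd_componentOutside_subset hs)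
  refine ⟨d, ⟨p, fun z hz => ?_⟩, hds⟩
  rintro (hzC | hzN)
  · exact hwC ((mem_componentOutside.1 hzC).trans (ReachOutside.of_mem_support p hp hz).symm)
  · exact hp z hz (setNbhd_componentOutside_subset hzN)

lemma isMinimalSeparator_setNbhd (hx : x ∈ C) (hC : C ⊆ componentOutside G (setNbhd G C) x)
    (hw : IsFullOpposite G C w) (hne : (setNbhd G C).Nonempty) :
    IsMinimalSeparator G (setNbhd G C) := by
  obtain ⟨s₀, hs₀⟩ := hne
  obtain ⟨d₀, hwd₀, -⟩ := hw s₀ hs₀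
  have hw' : w ∉ C ∪ setNbhd G C := hwd₀.notMem_left
  refine ⟨x, w, fun h => hw' (.inl (h ▸ hx)),
    ⟨⟨fun hxw => hw' (.inr ⟨fun h => hw' (.inl h), x, hx, hxw.symm⟩), fun h => h.1 hx,
      fun h => hw' (.inr h), fun hr => hw' (.inl (mem_of_reachOutside_setNbhd hr hx))⟩, ?_⟩⟩
  intro T hT hsep
  obtain ⟨s, hs, hsT⟩ := Set.exists_of_ssubset hT
  obtain ⟨d, hwd, hds⟩ := hw s hs
  obtain ⟨-, c, hc, hsc⟩ := hs
  have hcT : c ∉ T := fun hcT => (hT.subset hcT).1 hc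
  have hwd' : ReachOutside G T w d := hwd.anti (hT.subset.trans Set.subset_union_right)
  have hxc : ReachOutside G T x c := (mem_componentOutside.1 (hC hc)).anti hT.subset
  exact hsep.2.2.2 (((hxc.trans (.of_adj hsc.symm hcT hsT)).trans
    (.of_adj hds.symm hsT hwd'.notMem_right)).trans hwd'.symm)

lemma isMoplex_of_isCliqueModule (hne : C.Nonempty) (hcm : IsCliqueModule G C)
    (hN : setNbhd G C = ∅ ∨ IsMinimalSeparator G (setNbhd G C)) (hw : IsFullOpposite G C w) :
    IsMoplex G C := by
  refine ⟨hne, hcm, fun Y hCY hY => ?_, hN⟩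
  by_contra hYC
  obtain ⟨y, hyY, hyC⟩ := Set.not_subset.1 fun h => hYC (h.antisymm hCY)
  obtain ⟨c, hc⟩ := hne
  have hyN : y ∈ setNbhd G C :=
    ⟨hyC, c, hc, hY.1 hyY (hCY hc) fun h => hyC (h ▸ hc)⟩
  obtain ⟨d, hwd, hdy⟩ := hw y hyN
  have hd : d ∉ C ∪ setNbhd G C := hwd.notMem_right
  have hdc : ¬ G.Adj d c := fun h => hd (.inr ⟨fun h' => hd (.inl h'), c, hc, h⟩)
  have hdY : d ∉ Y := fun h => hdc (hY.1 h (hCY hc) fun e => hd (.inl (e ▸ hc)))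
  rcases hY.2 d hdY with hall | hnone
  · exact hdc (hall c (hCY hc))
  · exact hnone y hyY hdy

/-- Two vertices that both reach `N(C)` outside `T ⊆ N[C]` are joined through the full component
opposite to `C`. -/
lemma IsFullOpposite.disjoint_or_disjoint (hw : IsFullOpposite G C w)
    (hT : T ⊆ C ∪ setNbhd G C) (hpq : ¬ ReachOutside G T p q) :
    Disjoint (componentOutside G T p) (setNbhd G C) ∨
      Disjoint (componentOutside G T q) (setNbhd G C) := by
  have reach_w : ∀ s ∈ setNbhd G C, s ∉ T → ReachOutside G T s w := fun s hs hsT => by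
    obtain ⟨d, hwd, hds⟩ := hw s hs
    have hwd' := hwd.anti hT
    exact (ReachOutside.of_adj hds.symm hsT hwd'.notMem_right).trans hwd'.symm
  by_contra! h
  obtain ⟨⟨s₁, hps₁ : ReachOutside G T p s₁, hs₁⟩, ⟨s₂, hqs₂ : ReachOutside G T q s₂, hs₂⟩⟩ :=
    And.intro (Set.not_disjoint_iff.1 h.1) (Set.not_disjoint_iff.1 h.2)
  exact hpq ((hps₁.trans (reach_w s₁ hs₁ hps₁.notMem_right)).trans
    (hqs₂.trans (reach_w s₂ hs₂ hqs₂.notMem_right)).symm)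

lemma exists_componentOutside_ssubset [Finite V] (hw : IsFullOpposite G C w)
    (hC : ¬ IsCliqueModule G C) :
    ∃ T g, IsMinimalSeparator G T ∧ g ∉ T ∧ componentOutside G T g ⊂ C := by
  by_cases hclique : G.IsClique C
  · obtain ⟨s, hsC, ⟨c₁, hc₁, hsc₁⟩, c₂, hc₂, hsc₂⟩ :
        ∃ s ∉ C, (∃ c ∈ C, G.Adj s c) ∧ ∃ c ∈ C, ¬ G.Adj s c := by
      simpa [IsCliqueModule, IsModule, hclique, not_or, and_comm] using hC
    have hs : s ∈ setNbhd G C := ⟨hsC, c₁, hc₁, hsc₁⟩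
    obtain ⟨T, hTC, hT⟩ := exists_isMinSeparator_subset_union_setNbhd hc₂ (.inr hs)
      (fun h => hsC (h ▸ hc₂)) fun h => hsc₂ h.symm
    have hc₁T : c₁ ∈ T := by
      by_contra h
      have hc₂c₁ : c₂ ≠ c₁ := fun e => hsc₂ (e ▸ hsc₁)
      exact hT.1.2.2.2 ((ReachOutside.of_adj (hclique hc₂ hc₁ hc₂c₁) hT.1.2.1 h).trans
        (.of_adj hsc₁.symm h hT.1.2.2.1))
    have hdisj : Disjoint (componentOutside G T c₂) (setNbhd G C) :=
      (hw.disjoint_or_disjoint hTC hT.1.2.2.2).resolve_right fun h =>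
        Set.disjoint_left.1 h (ReachOutside.refl hT.1.2.2.1) hs
    exact ⟨T, c₂, ⟨c₂, s, fun h => hsC (h ▸ hc₂), hT⟩, hT.1.2.1,
      componentOutside_ssubset hc₂ hdisj hc₁ fun h => h.notMem_right hc₁T⟩
  · obtain ⟨p, hp, q, hq, hpq, hadj⟩ : ∃ p ∈ C, ∃ q ∈ C, p ≠ q ∧ ¬ G.Adj p q := by
      simpa [SimpleGraph.IsClique, Set.Pairwise] using hclique
    obtain ⟨T, hTC, hT⟩ := exists_isMinSeparator_subset_union_setNbhd hp (.inl hq) hpq hadj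
    rcases hw.disjoint_or_disjoint hTC hT.1.2.2.2 with h | h
    · exact ⟨T, p, ⟨p, q, hpq, hT⟩, hT.1.2.1, componentOutside_ssubset hp h hq hT.1.2.2.2⟩
    · exact ⟨T, q, ⟨q, p, hpq.symm, hT.symm⟩, hT.1.2.2.1,
        componentOutside_ssubset hq h hp fun r => hT.1.2.2.2 r.symm⟩

theorem exists_isMoplex_subset_componentOutside [Finite V] (hS : IsMinimalSeparator G S)
    (hx : x ∉ S) : ∃ X, IsMoplex G X ∧ X ⊆ componentOutside G S x := by
  suffices ∀ C S x, IsMinimalSeparator G S → x ∉ S → componentOutside G S x = C →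
      ∃ X, IsMoplex G X ∧ X ⊆ C from this _ S x hS hx rfl
  intro C
  induction C using WellFoundedLT.induction with
  | _ C ih =>
  rintro S x ⟨u, v, -, hmin⟩ hx rfl
  obtain ⟨w, hw⟩ := exists_isFullOpposite_componentOutside (x := x) hmin
  by_cases hcm : IsCliqueModule G (componentOutside G S x)
  · refine ⟨_, isMoplex_of_isCliqueModule ⟨x, .refl hx⟩ hcm ?_ hw, subset_rfl⟩
    refine (Set.eq_empty_or_nonempty _).imp_right
      (isMinimalSeparator_setNbhd (.refl hx) (fun y hy => ?_) hw)
    exact (mem_componentOutside.1 hy).anti setNbhd_componentOutside_subset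
  · obtain ⟨T, g, hT, hg, hlt⟩ := exists_componentOutside_ssubset hw hcm
    obtain ⟨X, hX, hXsub⟩ := ih _ hlt T g hT hg rfl
    exact ⟨X, hX, hXsub.trans hlt.subset⟩

lemma IsSeparator.separates_of_subset {U W : Set V} (h : IsSeparator G u v S)
    (hU : U ⊆ componentOutside G S u) (hW : W ⊆ componentOutside G S v) :
    (∀ a ∈ U, a ∉ S) ∧ (∀ b ∈ W, b ∉ S) ∧ ∀ a ∈ U, ∀ b ∈ W, ¬ ReachOutside G S a b := by
  refine ⟨fun a ha => (mem_componentOutside.1 (hU ha)).notMem_right,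
    fun b hb => (mem_componentOutside.1 (hW hb)).notMem_right, fun a ha b hb hab => ?_⟩
  exact h.2.2.2 (((mem_componentOutside.1 (hU ha)).trans hab).trans
    (mem_componentOutside.1 (hW hb)).symm)

theorem twoMoplexes_minSep_two_components_general {V : Type*} [Fintype V] (G : SimpleGraph V)
    (U W : Set V) (h : HasExactlyTwoMoplexes G U W)
    (S : Set V) (hS : IsMinimalSeparator G S) :
    (∀ u ∈ U, u ∉ S) ∧ (∀ w ∈ W, w ∉ S) ∧
    (∀ u ∈ U, ∀ w ∈ W, ¬ ReachOutside G S u w) ∧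
    (∀ x, x ∉ S → (∃ u ∈ U, ReachOutside G S x u) ∨ (∃ w ∈ W, ReachOutside G S x w)) := by
  obtain ⟨hU, hW, -, honly⟩ := h
  have hmoplex : ∀ x ∉ S, ∃ X, (X = U ∨ X = W) ∧ X ⊆ componentOutside G S x := fun x hx =>
    let ⟨X, hX, hXsub⟩ := exists_isMoplex_subset_componentOutside hS hx
    ⟨X, honly X hX, hXsub⟩
  have hreach : ∀ x ∉ S, (∃ u ∈ U, ReachOutside G S x u) ∨ (∃ w ∈ W, ReachOutside G S x w) := by
    intro x hx
    obtain ⟨X, rfl | rfl, hXsub⟩ := hmoplex x hx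
    · exact .inl (hU.1.imp fun z hz => ⟨hz, hXsub hz⟩)
    · exact .inr (hW.1.imp fun z hz => ⟨hz, hXsub hz⟩)
  obtain ⟨u, v, -, ⟨hsep, -⟩⟩ := hS
  obtain ⟨Xu, hXu, hXuC⟩ := hmoplex u hsep.2.1
  obtain ⟨Xv, hXv, hXvC⟩ := hmoplex v hsep.2.2.1
  have hdisj := hsep.disjoint_componentOutside.mono hXuC hXvC
  rcases hXu with rfl | rfl <;> rcases hXv with rfl | rfl
  · exact absurd (disjoint_self.1 hdisj) hU.1.ne_empty
  · obtain ⟨hUS, hWS, hUW⟩ := hsep.separates_of_subset hXuC hXvC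
    exact ⟨hUS, hWS, hUW, hreach⟩
  · obtain ⟨hUS, hWS, hUW⟩ := hsep.symm.separates_of_subset hXvC hXuC
    exact ⟨hUS, hWS, hUW, hreach⟩
  · exact absurd (disjoint_self.1 hdisj) hW.1.ne_empty

/-- In a non-complete graph with exactly two moplexes `U` and `W`, for every minimal
separator `S`, the graph `G - S` has exactly two components, one containing `U` and
the other containing `W`. -/
theorem twoMoplexes_minSep_two_components {V : Type*} [Fintype V] (G : SimpleGraph V)
    (U W : Set V) (hnc : NonComplete G) (h : HasExactlyTwoMoplexes G U W)
    (S : Set V) (hS : IsMinimalSeparator G S) :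
    (∀ u ∈ U, u ∉ S) ∧ (∀ w ∈ W, w ∉ S) ∧
    (∀ u ∈ U, ∀ w ∈ W, ¬ ReachOutside G S u w) ∧
    (∀ x, x ∉ S → (∃ u ∈ U, ReachOutside G S x u) ∨ (∃ w ∈ W, ReachOutside G S x w)) :=
  twoMoplexes_minSep_two_components_general G U W h S hS

end MoplexPaper
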